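/- Let S_Z be an orbital fuzzy iterated function system and u ∈ F*_S. Then the map U : [u]^* → F*_X defined by U(x) = u_x (the limit of Z^[n](δ_x)) is continuous, where [u]^* carries the metric of X and F*_X the metric d_∞. -/

import Mathlib

open Metric Filter Topology Set

/-- The orbit of a point `x` under the family of maps `f i`:
`x` together with all images of `x` under finite compositions of the `f i`. -/
def orbitIFS {X I : Type*} (f : I → X → X) (x : X) : Set X :=
  ⋃ l : List I, {l.foldr (fun i y => f i y) x}

/-- The fractal (Hutchinson–Barnsley) operator `K ↦ ⋃ i, f i '' K`. -/
def fractalOp {X I : Type*} (f : I → X → X) (K : Set X) : Set X :=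
  ⋃ i, f i '' K

/-- Image of a fuzzy set under a map: `f(u)(y) = sup_{x ∈ f⁻¹ y} u x` (0 if empty). -/
noncomputable def fuzzyImage {X : Type*} (g : X → X) (u : X → ℝ) : X → ℝ :=
  fun y => sSup (u '' (g ⁻¹' {y}))

/-- The fuzzy Hutchinson–Barnsley operator `Z(u) = ∨ i, ρ i (f i (u))`. -/
noncomputable def Zop {X I : Type*} (f : I → X → X) (ρ : I → ℝ → ℝ) (u : X → ℝ) : X → ℝ :=
  fun y => ⨆ i, ρ i (fuzzyImage (f i) u y)

/-- The metric `d_∞(u,v) = sup_{α ∈ (0,1]} h([u]^α, [v]^α)`. -/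
noncomputable def dInfty {X : Type*} [MetricSpace X] (u v : X → ℝ) : ℝ :=
  ⨆ α : Ioc (0:ℝ) 1, hausdorffDist {x | (α:ℝ) ≤ u x} {x | (α:ℝ) ≤ v x}

/-- The support of a fuzzy set: the closure of `{x | 0 < u x}`. -/
def fsupp {X : Type*} [MetricSpace X] (u : X → ℝ) : Set X := closure {x | 0 < u x}

/-- The crisp fuzzy point `δ_s`. -/
def fdelta {X : Type*} [DecidableEq X] (s : X) : X → ℝ := fun t => if t = s then 1 else 0

/-- `u^x` : the restriction of `u` to the closure of the orbit of `w` (zero outside). -/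
noncomputable def restrictO {X I : Type*} [MetricSpace X] (f : I → X → X) (u : X → ℝ)
    (w : X) : X → ℝ :=
  (closure (orbitIFS f w)).indicator u

/-- A normal compactly supported fuzzy set (with values in `[0,1]`). -/
def IsFuzzyN {X : Type*} [MetricSpace X] (u : X → ℝ) : Prop :=
  (∀ x, u x ∈ Icc (0:ℝ) 1) ∧ (∃ x, u x = 1) ∧ IsCompact (fsupp u)

/-- An upper semicontinuous normal compactly supported fuzzy set: membership in `F*_X`. -/
def IsFuzzyStar {X : Type*} [MetricSpace X] (u : X → ℝ) : Prop :=
  IsFuzzyN u ∧ UpperSemicontinuous u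

/-- Membership in `F*_S`: for each point of positive membership there is an orbit
containing it together with a point of membership one. -/
def InFS {X I : Type*} [MetricSpace X] (f : I → X → X) (u : X → ℝ) : Prop :=
  IsFuzzyStar u ∧ ∀ x, 0 < u x → ∃ w y, x ∈ orbitIFS f w ∧ y ∈ orbitIFS f w ∧ u y = 1

/-- The orbital contraction condition. -/
def OrbitalContr {X I : Type*} [MetricSpace X] (f : I → X → X) (C : ℝ) : Prop :=
  ∀ i x, ∀ y ∈ orbitIFS f x, ∀ z ∈ orbitIFS f x, dist (f i y) (f i z) ≤ C * dist y z

/-- An admissible system of grey level maps. -/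
def Admissible {I : Type*} (ρ : I → ℝ → ℝ) : Prop :=
  (∀ i, ρ i 0 = 0) ∧ (∀ i, MonotoneOn (ρ i) (Icc (0:ℝ) 1)) ∧
  (∀ i, ∀ t ∈ Icc (0:ℝ) 1, ContinuousWithinAt (ρ i) (Ici t) t) ∧
  (∀ i, ∀ t ∈ Icc (0:ℝ) 1, ρ i t ∈ Icc (0:ℝ) 1) ∧ (∃ j, ρ j 1 = 1)

/-!
The `α`-cut of `Z^[n](δ_y)` is the set of points `f_{l₁} ∘ ⋯ ∘ f_{lₙ} (y)` over the words `l` of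
length `n` whose grey level `ρ_{l₁} ∘ ⋯ ∘ ρ_{lₙ} (1)` is at least `α`. Matching each word of
length `n` with a word of length `n + 1` (append a letter `j` with `ρ j 1 = 1`, or drop the last
letter) shows, by the orbital contraction, that consecutive iterates are at most
`C ^ n * max_i dist (f i y) y` apart in `d_∞`. Hence `Z^[n](δ_y) → u_y` at a geometric rate that is
locally uniform in `y`, while each `y ↦ Z^[n](δ_y)` is continuous because it only involves the
finitely many continuous maps `f_{l₁} ∘ ⋯ ∘ f_{lₙ}`; a locally uniform limit of continuous maps is
continuous.
-/

section Words

variable {X I : Type*}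

def wordMap (f : I → X → X) (l : List I) (x : X) : X := l.foldr f x

lemma wordMap_append (f : I → X → X) (l m : List I) (x : X) :
    wordMap f (l ++ m) x = wordMap f l (wordMap f m x) :=
  List.foldr_append ..

lemma wordMap_mem_orbitIFS (f : I → X → X) (l : List I) (x : X) :
    wordMap f l x ∈ orbitIFS f x :=
  mem_iUnion.2 ⟨l, rfl⟩

lemma wordMap_mem_orbitIFS_of_mem (f : I → X → X) (l : List I) {x a : X}
    (ha : a ∈ orbitIFS f x) : wordMap f l a ∈ orbitIFS f x := by
  obtain ⟨m, rfl⟩ : ∃ m, wordMap f m x = a := by simpa [orbitIFS, wordMap, eq_comm] using ha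
  rw [← wordMap_append]
  exact wordMap_mem_orbitIFS f _ x

lemma continuous_wordMap [TopologicalSpace X] {f : I → X → X} (hf : ∀ i, Continuous (f i))
    (l : List I) : Continuous (wordMap f l) := by
  induction l with
  | nil => exact continuous_id
  | cons i l ih => exact (hf i).comp ih

lemma dist_wordMap_le [MetricSpace X] {f : I → X → X} {C : ℝ} (horb : OrbitalContr f C)
    (hC0 : 0 ≤ C) (l : List I) {x a b : X} (ha : a ∈ orbitIFS f x) (hb : b ∈ orbitIFS f x) :
    dist (wordMap f l a) (wordMap f l b) ≤ C ^ l.length * dist a b := by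
  induction l with
  | nil => simp [wordMap]
  | cons i l ih =>
    calc dist (f i (wordMap f l a)) (f i (wordMap f l b))
        ≤ C * dist (wordMap f l a) (wordMap f l b) :=
          horb i x _ (wordMap_mem_orbitIFS_of_mem f l ha) _ (wordMap_mem_orbitIFS_of_mem f l hb)
      _ ≤ C * (C ^ l.length * dist a b) := mul_le_mul_of_nonneg_left ih hC0
      _ = C ^ (i :: l).length * dist a b := by rw [List.length_cons, pow_succ']; ring

end Words

section Grey

variable {I : Type*} {ρ : I → ℝ → ℝ}

def wordGrey (ρ : I → ℝ → ℝ) (l : List I) : ℝ := l.foldr ρ 1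

lemma Admissible.mapsTo_foldr (hρ : Admissible ρ) (l : List I) :
    MapsTo (fun t => l.foldr ρ t) (Icc 0 1) (Icc 0 1) := by
  induction l with
  | nil => exact mapsTo_id _
  | cons i l ih => exact fun t ht => hρ.2.2.2.1 i _ (ih ht)

lemma Admissible.monotoneOn_foldr (hρ : Admissible ρ) (l : List I) :
    MonotoneOn (fun t => l.foldr ρ t) (Icc 0 1) := by
  induction l with
  | nil => exact monotone_id.monotoneOn _
  | cons i l ih =>
    exact fun s hs t ht hst => hρ.2.1 i (hρ.mapsTo_foldr l hs) (hρ.mapsTo_foldr l ht) (ih hs ht hst)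

lemma wordGrey_mem_Icc (hρ : Admissible ρ) (l : List I) : wordGrey ρ l ∈ Icc 0 1 :=
  hρ.mapsTo_foldr l (right_mem_Icc.2 zero_le_one)

lemma wordGrey_append_singleton_le (hρ : Admissible ρ) (l : List I) (i : I) :
    wordGrey ρ (l ++ [i]) ≤ wordGrey ρ l := by
  have hi : ρ i 1 ∈ Icc (0 : ℝ) 1 := hρ.2.2.2.1 i 1 (right_mem_Icc.2 zero_le_one)
  simpa [wordGrey, List.foldr_append] using
    hρ.monotoneOn_foldr l hi (right_mem_Icc.2 zero_le_one) hi.2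

lemma wordGrey_append_singleton_of_eq_one (l : List I) {j : I} (hj : ρ j 1 = 1) :
    wordGrey ρ (l ++ [j]) = wordGrey ρ l := by
  simp [wordGrey, List.foldr_append, hj]

lemma wordGrey_replicate_of_eq_one {j : I} (hj : ρ j 1 = 1) (n : ℕ) :
    wordGrey ρ (List.replicate n j) = 1 := by
  induction n with
  | zero => rfl
  | succ n ih => simpa [wordGrey, List.replicate_succ, hj] using congrArg (ρ j) ih

end Grey

section FuzzyImage

variable {X : Type*}

lemma fuzzyImage_mem_Icc {v : X → ℝ} (hv : ∀ x, v x ∈ Icc (0 : ℝ) 1) (g : X → X) (y : X) :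
    fuzzyImage g v y ∈ Icc (0 : ℝ) 1 := by
  rcases (g ⁻¹' {y}).eq_empty_or_nonempty with h | h
  · simp [fuzzyImage, h]
  · exact ⟨Real.sSup_nonneg (by rintro _ ⟨x, _, rfl⟩; exact (hv x).1),
      csSup_le (h.image v) (by rintro _ ⟨x, _, rfl⟩; exact (hv x).2)⟩

lemma le_fuzzyImage {v : X → ℝ} (hv : BddAbove (range v)) (g : X → X) (x : X) :
    v x ≤ fuzzyImage g v (g x) :=
  le_csSup (hv.mono (image_subset_range _ _)) ⟨x, rfl, rfl⟩

lemma exists_eq_fuzzyImage {v : X → ℝ} (hfin : {x | 0 < v x}.Finite) (g : X → X) {y : X}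
    (hpos : 0 < fuzzyImage g v y) : ∃ x, g x = y ∧ v x = fuzzyImage g v y := by
  set P := g ⁻¹' {y} ∩ {x | 0 < v x}
  have hP : P.Nonempty := by
    by_contra hP
    refine hpos.not_ge (Real.sSup_nonpos ?_)
    rintro _ ⟨x, hx, rfl⟩
    exact not_lt.1 fun h => hP ⟨x, hx, h⟩
  obtain ⟨x, ⟨hxy, hx⟩, hxmax⟩ := P.exists_max_image v (hfin.subset inter_subset_right) hP
  have hgreatest : IsGreatest (v '' (g ⁻¹' {y})) (v x) := by
    refine ⟨⟨x, hxy, rfl⟩, ?_⟩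
    rintro _ ⟨x', hx', rfl⟩
    rcases le_or_gt (v x') 0 with h | h
    · exact h.trans hx.le
    · exact hxmax x' ⟨hx', h⟩
  exact ⟨x, hxy, hgreatest.csSup_eq.symm⟩

end FuzzyImage

section Zop

variable {X I : Type*} {f : I → X → X} {ρ : I → ℝ → ℝ}

lemma Zop_mem_Icc (hρ : Admissible ρ) {v : X → ℝ} (hv : ∀ x, v x ∈ Icc (0 : ℝ) 1) (y : X) :
    Zop f ρ v y ∈ Icc (0 : ℝ) 1 :=
  have hmem i : ρ i (fuzzyImage (f i) v y) ∈ Icc (0 : ℝ) 1 :=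
    hρ.2.2.2.1 i _ (fuzzyImage_mem_Icc hv _ _)
  ⟨Real.iSup_nonneg fun i => (hmem i).1, Real.iSup_le (fun i => (hmem i).2) zero_le_one⟩

lemma iterate_Zop_fdelta_mem_Icc [DecidableEq X] (hρ : Admissible ρ) (y : X) (n : ℕ) (z : X) :
    (Zop f ρ)^[n] (fdelta y) z ∈ Icc (0 : ℝ) 1 := by
  induction n generalizing z with
  | zero => simp only [Function.iterate_zero, id_eq, fdelta]; split_ifs <;> simp
  | succ n ih => rw [Function.iterate_succ_apply']; exact Zop_mem_Icc hρ ih z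

variable [Finite I]

lemma le_Zop (i : I) (v : X → ℝ) (y : X) : ρ i (fuzzyImage (f i) v y) ≤ Zop f ρ v y :=
  le_ciSup (f := fun j => ρ j (fuzzyImage (f j) v y)) (finite_range _).bddAbove i

lemma exists_eq_Zop [Nonempty I] (v : X → ℝ) (y : X) :
    ∃ i, ρ i (fuzzyImage (f i) v y) = Zop f ρ v y :=
  exists_eq_ciSup_of_finite

variable [DecidableEq X]

lemma wordGrey_le_iterate_Zop (hρ : Admissible ρ) (y : X) (l : List I) :
    wordGrey ρ l ≤ (Zop f ρ)^[l.length] (fdelta y) (wordMap f l y) := by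
  induction l with
  | nil => simp [wordGrey, wordMap, fdelta]
  | cons i l ih =>
    set v := (Zop f ρ)^[l.length] (fdelta y)
    have hv : ∀ z, v z ∈ Icc (0 : ℝ) 1 := iterate_Zop_fdelta_mem_Icc hρ y l.length
    have hle : wordGrey ρ l ≤ fuzzyImage (f i) v (f i (wordMap f l y)) :=
      ih.trans (le_fuzzyImage ⟨1, by rintro _ ⟨z, rfl⟩; exact (hv z).2⟩ _ _)
    rw [List.length_cons, Function.iterate_succ_apply']
    exact (hρ.2.1 i (wordGrey_mem_Icc hρ l) (fuzzyImage_mem_Icc hv _ _) hle).trans (le_Zop i v _)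

lemma exists_word_of_le_iterate_Zop [Nonempty I] (hρ : Admissible ρ) (y : X) (n : ℕ) {α : ℝ}
    (hα : 0 < α) {z : X} (h : α ≤ (Zop f ρ)^[n] (fdelta y) z) :
    ∃ l : List I, l.length = n ∧ α ≤ wordGrey ρ l ∧ wordMap f l y = z := by
  induction n generalizing α z with
  | zero =>
    have hz : z = y := by
      by_contra hz
      simp only [Function.iterate_zero, id_eq, fdelta, if_neg hz] at h
      linarith
    subst hz
    exact ⟨[], rfl, by simpa [fdelta, wordGrey] using h, rfl⟩
  | succ n ih =>
    set v := (Zop f ρ)^[n] (fdelta y)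
    rw [Function.iterate_succ_apply'] at h
    obtain ⟨i, hi⟩ := exists_eq_Zop (f := f) (ρ := ρ) v z
    have hm : fuzzyImage (f i) v z ∈ Icc (0 : ℝ) 1 :=
      fuzzyImage_mem_Icc (iterate_Zop_fdelta_mem_Icc hρ y n) _ _
    have hαm : α ≤ ρ i (fuzzyImage (f i) v z) := hi ▸ h
    have hm0 : 0 < fuzzyImage (f i) v z := by
      refine hm.1.lt_of_ne fun h0 => ?_
      rw [← h0, hρ.1 i] at hαm
      linarith
    have hfin : {w | 0 < v w}.Finite := by
      refine ((List.finite_length_eq I n).image (wordMap f · y)).subset fun w hw => ?_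
      obtain ⟨l, hl, -, rfl⟩ := ih hw le_rfl
      exact ⟨l, hl, rfl⟩
    obtain ⟨w, rfl, hw⟩ := exists_eq_fuzzyImage hfin (f i) hm0
    obtain ⟨l, hl, hlm, rfl⟩ := ih hm0 hw.ge
    exact ⟨i :: l, by simp [hl], hαm.trans (hρ.2.1 i hm (wordGrey_mem_Icc hρ l) hlm), rfl⟩

lemma setOf_le_iterate_Zop_fdelta [Nonempty I] (hρ : Admissible ρ) (y : X) (n : ℕ) {α : ℝ}
    (hα : 0 < α) :
    {z | α ≤ (Zop f ρ)^[n] (fdelta y) z} =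
      (wordMap f · y) '' {l | l.length = n ∧ α ≤ wordGrey ρ l} := by
  ext z
  constructor
  · intro h
    obtain ⟨l, hl, hαl, rfl⟩ := exists_word_of_le_iterate_Zop hρ y n hα h
    exact ⟨l, ⟨hl, hαl⟩, rfl⟩
  · rintro ⟨l, ⟨rfl, hαl⟩, rfl⟩
    exact hαl.trans (wordGrey_le_iterate_Zop hρ y l)

end Zop

section LevelBounded

variable {X : Type*} [MetricSpace X]

def HasBoundedLevels (v : X → ℝ) : Prop :=
  ∃ S : Set X, Bornology.IsBounded S ∧
    ∀ α ∈ Ioc (0 : ℝ) 1, {x | α ≤ v x}.Nonempty ∧ {x | α ≤ v x} ⊆ S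

lemma IsFuzzyStar.hasBoundedLevels {v : X → ℝ} (hv : IsFuzzyStar v) : HasBoundedLevels v := by
  obtain ⟨⟨-, ⟨x, hx⟩, hcompact⟩, -⟩ := hv
  exact ⟨fsupp v, hcompact.isBounded, fun α hα =>
    ⟨⟨x, show α ≤ v x from hx ▸ hα.2⟩, fun z hz => subset_closure (hα.1.trans_le hz)⟩⟩

instance : Nonempty (Ioc (0 : ℝ) 1) := ⟨⟨1, zero_lt_one, le_rfl⟩⟩

lemma dInfty_le {u v : X → ℝ} {r : ℝ}
    (h : ∀ α ∈ Ioc (0 : ℝ) 1, hausdorffDist {x | α ≤ u x} {x | α ≤ v x} ≤ r) :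
    dInfty u v ≤ r :=
  ciSup_le fun α => h α α.2

lemma hausdorffDist_le_dInfty {u v : X → ℝ} (hu : HasBoundedLevels u) (hv : HasBoundedLevels v)
    {α : ℝ} (hα : α ∈ Ioc (0 : ℝ) 1) :
    hausdorffDist {x | α ≤ u x} {x | α ≤ v x} ≤ dInfty u v := by
  obtain ⟨S, hS, hSu⟩ := hu
  obtain ⟨T, hT, hTv⟩ := hv
  refine le_ciSup (f := fun β : Ioc (0 : ℝ) 1 => hausdorffDist {x | β ≤ u x} {x | β ≤ v x})
    ⟨diam (S ∪ T), ?_⟩ ⟨α, hα⟩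
  rintro _ ⟨β, rfl⟩
  obtain ⟨hu₁, hu₂⟩ := hSu β β.2
  obtain ⟨hv₁, hv₂⟩ := hTv β β.2
  exact (hausdorffDist_le_diam hu₁ (hS.subset hu₂) hv₁ (hT.subset hv₂)).trans
    (diam_mono (union_subset_union hu₂ hv₂) (hS.union hT))

lemma dInfty_self (u : X → ℝ) : dInfty u u = 0 := by
  simp [dInfty]

lemma dInfty_comm (u v : X → ℝ) : dInfty u v = dInfty v u := by
  simp only [dInfty, hausdorffDist_comm]

lemma dInfty_triangle {u v w : X → ℝ} (hu : HasBoundedLevels u) (hv : HasBoundedLevels v)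
    (hw : HasBoundedLevels w) : dInfty u w ≤ dInfty u v + dInfty v w := by
  refine dInfty_le fun α hα => ?_
  obtain ⟨S, hS, hSu⟩ := id hu
  obtain ⟨T, hT, hTv⟩ := id hv
  have hfin : hausdorffEDist {x | α ≤ u x} {x | α ≤ v x} ≠ ⊤ :=
    hausdorffEDist_ne_top_of_nonempty_of_bounded (hSu α hα).1 (hTv α hα).1
      (hS.subset (hSu α hα).2) (hT.subset (hTv α hα).2)
  exact (hausdorffDist_triangle hfin).trans
    (add_le_add (hausdorffDist_le_dInfty hu hv hα) (hausdorffDist_le_dInfty hv hw hα))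

structure LevelBoundedFuzzySet (X : Type*) [MetricSpace X] where
  toFun : X → ℝ
  hasBoundedLevels : HasBoundedLevels toFun

/-- Only a pseudometric: `d_∞` does not separate fuzzy sets whose cuts have the same closures. -/
noncomputable instance : PseudoMetricSpace (LevelBoundedFuzzySet X) where
  dist u v := dInfty u.toFun v.toFun
  dist_self u := dInfty_self u.toFun
  dist_comm u v := dInfty_comm u.toFun v.toFun
  dist_triangle u v w := dInfty_triangle u.hasBoundedLevels v.hasBoundedLevels w.hasBoundedLevels

end LevelBounded

section FuzzyIterate

variable {X I : Type*} [MetricSpace X] [DecidableEq X] [Finite I] [Nonempty I]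
  {f : I → X → X} {ρ : I → ℝ → ℝ}

lemma hasBoundedLevels_iterate_Zop_fdelta (hρ : Admissible ρ) (y : X) (n : ℕ) :
    HasBoundedLevels ((Zop f ρ)^[n] (fdelta y)) := by
  obtain ⟨j, hj⟩ := hρ.2.2.2.2
  refine ⟨(wordMap f · y) '' {l | l.length = n}, ((List.finite_length_eq I n).image _).isBounded,
    fun α hα => ⟨⟨wordMap f (List.replicate n j) y, ?_⟩, ?_⟩⟩
  · have h := wordGrey_le_iterate_Zop (f := f) hρ y (List.replicate n j)
    rw [wordGrey_replicate_of_eq_one hj, List.length_replicate] at h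
    exact hα.2.trans h
  · rw [setOf_le_iterate_Zop_fdelta hρ y n hα.1]
    exact image_mono fun l hl => hl.1

variable (f) in
noncomputable def fuzzyIterate (hρ : Admissible ρ) (n : ℕ) (y : X) : LevelBoundedFuzzySet X :=
  ⟨(Zop f ρ)^[n] (fdelta y), hasBoundedLevels_iterate_Zop_fdelta hρ y n⟩

variable {hρ : Admissible ρ} {C : ℝ}

lemma dist_fuzzyIterate_le {m n : ℕ} {x y : X} {r : ℝ} (hr : 0 ≤ r)
    (hxy : ∀ l : List I, l.length = m → ∃ l' : List I, l'.length = n ∧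
      wordGrey ρ l ≤ wordGrey ρ l' ∧ dist (wordMap f l x) (wordMap f l' y) ≤ r)
    (hyx : ∀ l' : List I, l'.length = n → ∃ l : List I, l.length = m ∧
      wordGrey ρ l' ≤ wordGrey ρ l ∧ dist (wordMap f l x) (wordMap f l' y) ≤ r) :
    dist (fuzzyIterate f hρ m x) (fuzzyIterate f hρ n y) ≤ r := by
  refine dInfty_le fun α hα => ?_
  simp only [fuzzyIterate, setOf_le_iterate_Zop_fdelta hρ _ _ hα.1]
  refine hausdorffDist_le_of_mem_dist hr ?_ ?_
  · rintro _ ⟨l, ⟨hl, hαl⟩, rfl⟩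
    obtain ⟨l', hl', hgrey, hdist⟩ := hxy l hl
    exact ⟨wordMap f l' y, ⟨l', ⟨hl', hαl.trans hgrey⟩, rfl⟩, hdist⟩
  · rintro _ ⟨l', ⟨hl', hαl'⟩, rfl⟩
    obtain ⟨l, hl, hgrey, hdist⟩ := hyx l' hl'
    exact ⟨wordMap f l x, ⟨l, ⟨hl, hαl'.trans hgrey⟩, rfl⟩, by rwa [dist_comm]⟩

lemma dist_fuzzyIterate_succ_le (horb : OrbitalContr f C) (hC0 : 0 ≤ C) {y : X} {r : ℝ}
    (hr : ∀ i, dist (f i y) y ≤ r) (n : ℕ) :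
    dist (fuzzyIterate f hρ n y) (fuzzyIterate f hρ (n + 1) y) ≤ r * C ^ n := by
  have hy : y ∈ orbitIFS f y := wordMap_mem_orbitIFS f [] y
  have hshift : ∀ (l : List I) (i : I), l.length = n →
      dist (wordMap f l y) (wordMap f (l ++ [i]) y) ≤ r * C ^ n := fun l i hl => by
    rw [wordMap_append, ← hl, mul_comm]
    refine (dist_wordMap_le horb hC0 l hy (wordMap_mem_orbitIFS f [i] y)).trans ?_
    rw [dist_comm]
    exact mul_le_mul_of_nonneg_left (hr i) (pow_nonneg hC0 _)
  obtain ⟨j, hj⟩ := hρ.2.2.2.2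
  have hr0 : 0 ≤ r * C ^ n := mul_nonneg (dist_nonneg.trans (hr j)) (pow_nonneg hC0 n)
  refine dist_fuzzyIterate_le hr0 (fun l hl => ?_) (fun l' hl' => ?_)
  · exact ⟨l ++ [j], by simp [hl], (wordGrey_append_singleton_of_eq_one l hj).ge, hshift l j hl⟩
  · obtain ⟨l, i, rfl⟩ : ∃ l i, l' = l ++ [i] := by
      rcases l'.eq_nil_or_concat with rfl | ⟨l, i, rfl⟩
      · simp at hl'
      · exact ⟨l, i, List.concat_eq_append ..⟩
    have hl : l.length = n := by simpa using hl'
    exact ⟨l, hl, wordGrey_append_singleton_le hρ l i, hshift l i hl⟩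

lemma dist_fuzzyIterate_le_of_tendsto (horb : OrbitalContr f C) (hC0 : 0 ≤ C)
    (hC1 : C < 1) {y : X} {r : ℝ} (hr : ∀ i, dist (f i y) y ≤ r) {V : LevelBoundedFuzzySet X}
    (hV : Tendsto (fuzzyIterate f hρ · y) atTop (𝓝 V)) (n : ℕ) :
    dist (fuzzyIterate f hρ n y) V ≤ r * C ^ n / (1 - C) :=
  dist_le_of_le_geometric_of_tendsto C r hC1 (dist_fuzzyIterate_succ_le horb hC0 hr) hV n

lemma continuous_fuzzyIterate (hf : ∀ i, Continuous (f i)) (n : ℕ) :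
    Continuous (fuzzyIterate f hρ n) := by
  refine continuous_iff_continuousAt.2 fun x => Metric.continuousAt_iff'.2 fun ε hε => ?_
  have hwords : ∀ᶠ y in 𝓝 x, ∀ l ∈ {l : List I | l.length = n},
      dist (wordMap f l y) (wordMap f l x) < ε / 2 :=
    (eventually_all_finite (List.finite_length_eq I n)).2 fun l _ =>
      Metric.continuousAt_iff'.1 (continuous_wordMap hf l).continuousAt _ (half_pos hε)
  filter_upwards [hwords] with y hy
  refine (dist_fuzzyIterate_le (half_pos hε).le (fun l hl => ?_) (fun l hl => ?_)).trans_lt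
    (half_lt_self hε)
  · exact ⟨l, hl, le_rfl, (hy l hl).le⟩
  · exact ⟨l, hl, le_rfl, (hy l hl).le⟩

theorem tendstoLocallyUniformly_fuzzyIterate (hf : ∀ i, Continuous (f i))
    (horb : OrbitalContr f C) (hC0 : 0 ≤ C) (hC1 : C < 1) {s : Set X}
    {U : s → LevelBoundedFuzzySet X}
    (hU : ∀ y : s, Tendsto (fuzzyIterate f hρ · y) atTop (𝓝 (U y))) :
    TendstoLocallyUniformly (fun n (y : s) => fuzzyIterate f hρ n y) U atTop := by
  refine Metric.tendstoLocallyUniformly_iff.2 fun ε hε x => ?_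
  obtain ⟨R, hR⟩ := (finite_range fun i => dist (f i x) x).bddAbove
  have hnear : ∀ᶠ y : s in 𝓝 x, ∀ i, dist (f i y) y < R + 1 := by
    refine eventually_all.2 fun i => ?_
    have hcont : Continuous fun y : s => dist (f i y) (y : X) :=
      ((hf i).comp continuous_subtype_val).dist continuous_subtype_val
    exact hcont.continuousAt.eventually_lt continuousAt_const
      ((hR ⟨i, rfl⟩).trans_lt (lt_add_one R))
  have hbound : Tendsto (fun n => (R + 1) * C ^ n / (1 - C)) atTop (𝓝 0) := by
    simpa using ((tendsto_pow_atTop_nhds_zero_of_lt_one hC0 hC1).const_mul (R + 1)).div_const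
      (1 - C)
  refine ⟨_, hnear, (hbound.eventually (gt_mem_nhds hε)).mono fun n hn y hy => ?_⟩
  rw [dist_comm]
  exact (dist_fuzzyIterate_le_of_tendsto horb hC0 hC1 (fun i => (hy i).le) (hU y) n).trans_lt hn

end FuzzyIterate

theorem stmt8_general {X I : Type*} [MetricSpace X] [DecidableEq X]
    [Finite I] [Nonempty I]
    (f : I → X → X) (hcont : ∀ i, Continuous (f i))
    (C : ℝ) (hC0 : 0 ≤ C) (hC1 : C < 1) (horb : OrbitalContr f C)
    (ρ : I → ℝ → ℝ) (hρ : Admissible ρ)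
    (u : X → ℝ)
    (U : X → X → ℝ) (hUStar : ∀ x, 0 < u x → IsFuzzyStar (U x))
    (hU : ∀ x, 0 < u x →
      Tendsto (fun n => dInfty ((Zop f ρ)^[n] (fdelta x)) (U x)) atTop (nhds 0)) :
    ∀ x, 0 < u x → ∀ (xs : ℕ → X), (∀ n, 0 < u (xs n)) →
      Tendsto xs atTop (nhds x) →
      Tendsto (fun n => dInfty (U (xs n)) (U x)) atTop (nhds 0) := by
  intro x hx xs hxs hlim
  let V : {y | 0 < u y} → LevelBoundedFuzzySet X := fun y => ⟨U y, (hUStar y y.2).hasBoundedLevels⟩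
  have hVlim : ∀ y : {y | 0 < u y}, Tendsto (fuzzyIterate f hρ · y) atTop (𝓝 (V y)) := fun y =>
    tendsto_iff_dist_tendsto_zero.2 (hU y y.2)
  have hV : Continuous V :=
    (tendstoLocallyUniformly_fuzzyIterate hcont horb hC0 hC1 hVlim).continuous <|
      Frequently.of_forall fun n => (continuous_fuzzyIterate hcont n).comp continuous_subtype_val
  have hlim' : Tendsto (fun k => (⟨xs k, hxs k⟩ : {y | 0 < u y})) atTop (𝓝 ⟨x, hx⟩) :=
    tendsto_subtype_rng.2 hlim
  exact tendsto_iff_dist_tendsto_zero.1 ((hV.tendsto _).comp hlim')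

/-- Proposition 3.3: the map `x ↦ u_x` is continuous from `[u]^*`
to `(F*_X, d_∞)`. -/
theorem stmt8 {X I : Type*} [MetricSpace X] [CompleteSpace X] [DecidableEq X]
    [Finite I] [Nonempty I]
    (f : I → X → X) (hcont : ∀ i, Continuous (f i))
    (C : ℝ) (hC0 : 0 ≤ C) (hC1 : C < 1) (horb : OrbitalContr f C)
    (ρ : I → ℝ → ℝ) (hρ : Admissible ρ)
    (u : X → ℝ) (hu : InFS f u)
    (U : X → X → ℝ) (hUStar : ∀ x, 0 < u x → IsFuzzyStar (U x))
    (hU : ∀ x, 0 < u x →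
      Tendsto (fun n => dInfty ((Zop f ρ)^[n] (fdelta x)) (U x)) atTop (nhds 0)) :
    ∀ x, 0 < u x → ∀ (xs : ℕ → X), (∀ n, 0 < u (xs n)) →
      Tendsto xs atTop (nhds x) →
      Tendsto (fun n => dInfty (U (xs n)) (U x)) atTop (nhds 0) :=
  stmt8_general f hcont C hC0 hC1 horb ρ hρ u U hUStar hU
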